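/- For the exactly linear drift F(x) = f + A(x − x₀) with A symmetric, the drift difference evaluated at the two embedded solutions satisfies F(x^Heun) − F(x^Euler) = A(x^Heun − x^Euler) = (h²/2) A² f; hence if f has a nonzero component along a simple dominant eigenvector v_1 of A, then as the spectral gap |λ_1|/max_{k≥2}|λ_k| → ∞ the normalized drift difference converges to ±v_1. -/

import Mathlib

/-!
For a linear drift the Heun and Euler predictions differ by `(h²/2) A f`, so the drift difference
is `d = (h²/2) A² f`. In the eigenbasis the coefficients of `d` are `(h²/2) λ_k² ⟪v_k, f⟫`, so the
part of `d` orthogonal to `v₁` is at most `(gap)⁻² ‖f‖ / |⟪v₁, f⟫|` times its `v₁`-component.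
Normalization satisfies `‖x/‖x‖ - y/‖y‖‖ ≤ 2 ‖x - y‖ / ‖y‖`; applied with `y` the `v₁`-component
of `d`, whose normalization is `±v₁`, this puts `d/‖d‖` within `O(gap⁻²)` of `±v₁`.
-/

open scoped RealInnerProductSpace

section HeunEuler

variable {E : Type*} [AddCommGroup E] [Module ℝ E]

def linearDrift (f : E) (A : E →ₗ[ℝ] E) (x₀ y : E) : E := f + A (y - x₀)

def eulerStep (F : E → E) (x₀ : E) (h : ℝ) : E := x₀ - h • F x₀

noncomputable def heunStep (F : E → E) (x₀ : E) (h : ℝ) : E :=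
  x₀ - (h / 2) • (F x₀ + F (eulerStep F x₀ h))

theorem linearDrift_sub_linearDrift (f : E) (A : E →ₗ[ℝ] E) (x₀ y z : E) :
    linearDrift f A x₀ y - linearDrift f A x₀ z = A (y - z) := by
  simp only [linearDrift, add_sub_add_left_eq_sub, ← map_sub, sub_sub_sub_cancel_right]

theorem heunStep_sub_eulerStep_linearDrift (f : E) (A : E →ₗ[ℝ] E) (x₀ : E) (h : ℝ) :
    heunStep (linearDrift f A x₀) x₀ h - eulerStep (linearDrift f A x₀) x₀ h =
      (h ^ 2 / 2) • A f := by
  simp only [heunStep, eulerStep, linearDrift, sub_self, map_zero, add_zero, sub_sub_cancel_left,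
    map_neg, map_smul]
  module

end HeunEuler

theorem norm_normalize_sub_normalize_le {V : Type*} [NormedAddCommGroup V] [NormedSpace ℝ V]
    (x : V) {y : V} (hy : y ≠ 0) :
    ‖NormedSpace.normalize x - NormedSpace.normalize y‖ ≤ 2 * ‖x - y‖ / ‖y‖ := by
  have hy' : 0 < ‖y‖ := norm_pos_iff.mpr hy
  by_cases hx : x = 0
  · simp [hx, NormedSpace.normalize, norm_smul, hy'.ne']
  calc ‖NormedSpace.normalize x - NormedSpace.normalize y‖
      = ‖‖y‖⁻¹ • (x - y) + ((‖y‖ - ‖x‖) / ‖y‖) • NormedSpace.normalize x‖ := by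
        have hx' : ‖x‖ ≠ 0 := norm_ne_zero_iff.mpr hx
        simp only [NormedSpace.normalize, smul_smul, smul_sub]
        have hcoef : (‖y‖ - ‖x‖) / ‖y‖ * ‖x‖⁻¹ = ‖x‖⁻¹ - ‖y‖⁻¹ := by field_simp
        rw [hcoef]
        congr 1
        module
    _ ≤ ‖x - y‖ / ‖y‖ + |‖y‖ - ‖x‖| / ‖y‖ := by
        grw [norm_add_le, norm_smul, norm_smul, NormedSpace.norm_normalize hx]
        simp [div_eq_inv_mul]
    _ ≤ 2 * ‖x - y‖ / ‖y‖ := by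
        grw [abs_norm_sub_norm_le y x, norm_sub_rev y x, two_mul, add_div]

section Eigenbasis

variable {ι E : Type*} [Fintype ι] [NormedAddCommGroup E] [InnerProductSpace ℝ E]
  {b : OrthonormalBasis ι ℝ E} {T : E →ₗ[ℝ] E} {μ : ι → ℝ}

theorem inner_basis_apply_of_apply_basis (hT : ∀ k, T (b k) = μ k • b k) (k : ι) (y : E) :
    ⟪b k, T y⟫ = μ k * ⟪b k, y⟫ := by
  conv_lhs => rw [← b.sum_repr' y]
  simp only [map_sum, map_smul, hT, smul_smul]
  rw [b.orthonormal.inner_right_fintype, mul_comm]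

theorem norm_apply_sub_smul_basis_le (hT : ∀ k, T (b k) = μ k • b k) {i : ι}
    {m : ℝ} (hm : 0 ≤ m) (hμ : ∀ k ≠ i, |μ k| ≤ m) (y : E) :
    ‖T y - (μ i * ⟪b i, y⟫) • b i‖ ≤ m * ‖y‖ := by
  classical
  have hcoord (k : ι) : ⟪b k, T y - (μ i * ⟪b i, y⟫) • b i⟫ ^ 2 ≤ m ^ 2 * ⟪b k, y⟫ ^ 2 := by
    rw [inner_sub_right, inner_basis_apply_of_apply_basis hT, real_inner_smul_right,
      orthonormal_iff_ite.mp b.orthonormal]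
    by_cases hk : k = i
    · subst hk
      rw [if_pos rfl, mul_one, sub_self, sq 0, zero_mul]
      positivity
    · simp only [hk, if_false, mul_zero, sub_zero, mul_pow, ← sq_abs (μ k)]
      gcongr
      exact hμ k hk
  refine (pow_le_pow_iff_left₀ (norm_nonneg _) (by positivity) two_ne_zero).mp ?_
  rw [mul_pow, ← b.sum_sq_inner_right, ← b.sum_sq_inner_right, Finset.mul_sum]
  exact Finset.sum_le_sum fun k _ => hcoord k

theorem norm_normalize_apply_sub_or_add_basis_le (hT : ∀ k, T (b k) = μ k • b k) {i : ι}
    {r : ℝ} (hr : 0 ≤ r) (hμ : ∀ k ≠ i, |μ k| ≤ r * |μ i|) (hμi : μ i ≠ 0) {y : E}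
    (hy : ⟪b i, y⟫ ≠ 0) :
    ‖NormedSpace.normalize (T y) - b i‖ ≤ 2 * r * ‖y‖ / |⟪b i, y⟫| ∨
      ‖NormedSpace.normalize (T y) + b i‖ ≤ 2 * r * ‖y‖ / |⟪b i, y⟫| := by
  set c := μ i * ⟪b i, y⟫
  have hc : c ≠ 0 := mul_ne_zero hμi hy
  have hbi : ‖b i‖ = 1 := b.orthonormal.1 i
  have hnear : ‖NormedSpace.normalize (T y) - NormedSpace.normalize (c • b i)‖ ≤
      2 * r * ‖y‖ / |⟪b i, y⟫| :=
    calc _ ≤ 2 * ‖T y - c • b i‖ / ‖c • b i‖ :=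
          norm_normalize_sub_normalize_le _ (smul_ne_zero hc (b.orthonormal.ne_zero i))
      _ ≤ 2 * (r * |μ i| * ‖y‖) / (|μ i| * |⟪b i, y⟫|) := by
          rw [norm_smul, hbi, mul_one, Real.norm_eq_abs, abs_mul]
          gcongr
          exact norm_apply_sub_smul_basis_le hT (by positivity) hμ y
      _ = 2 * r * ‖y‖ / |⟪b i, y⟫| := by
          field_simp
  rcases hc.lt_or_gt with hneg | hpos
  · right
    rwa [NormedSpace.normalize_smul_of_neg hneg, NormedSpace.normalize_eq_self_of_norm_eq_one hbi,
      sub_neg_eq_add] at hnear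
  · left
    rwa [NormedSpace.normalize_smul_of_pos hpos,
      NormedSpace.normalize_eq_self_of_norm_eq_one hbi] at hnear

theorem exists_gap_normalize_apply_near_basis {i : ι} {y : E} (hy : ⟪b i, y⟫ ≠ 0) {ε : ℝ}
    (hε : 0 < ε) :
    ∃ G : ℝ, ∀ (T : E →ₗ[ℝ] E) (μ : ι → ℝ), (∀ k, T (b k) = μ k • b k) → μ i ≠ 0 →
      (∀ k ≠ i, G * |μ k| < |μ i|) →
      T y ≠ 0 ∧ (‖NormedSpace.normalize (T y) - b i‖ < ε ∨
        ‖NormedSpace.normalize (T y) + b i‖ < ε) := by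
  have hy' : 0 < |⟪b i, y⟫| := abs_pos.mpr hy
  set a := 2 * ‖y‖ / (ε * |⟪b i, y⟫|)
  have hG : 0 < a + 1 := by positivity
  refine ⟨a + 1, fun T μ hT hμi hgap => ⟨fun h0 => mul_ne_zero hμi hy ?_, ?_⟩⟩
  · rw [← inner_basis_apply_of_apply_basis hT, h0, inner_zero_right]
  have hμ (k : ι) (hk : k ≠ i) : |μ k| ≤ (a + 1)⁻¹ * |μ i| := by
    rw [le_inv_mul_iff₀ hG]
    exact (hgap k hk).le
  have hbound : 2 * (a + 1)⁻¹ * ‖y‖ / |⟪b i, y⟫| < ε :=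
    calc 2 * (a + 1)⁻¹ * ‖y‖ / |⟪b i, y⟫| = ε * a / (a + 1) := by
          simp only [a]; field_simp
      _ < ε := by
          rw [div_lt_iff₀ hG]
          exact mul_lt_mul_of_pos_left (lt_add_one a) hε
  exact (norm_normalize_apply_sub_or_add_basis_le hT (by positivity) hμ hμi hy).imp
    (·.trans_lt hbound) (·.trans_lt hbound)

end Eigenbasis

/-- For the exactly linear drift F(x) = f + A(x − x₀) with A symmetric, the drift
difference at the two embedded solutions satisfies
F(x^Heun) − F(x^Euler) = A(x^Heun − x^Euler) = (h²/2) A² f; hence if f has a nonzero component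
along a simple dominant eigenvector v_{i0} of A, then as the spectral gap
|λ_{i0}|/max_{k≠i0}|λ_k| → ∞, the normalized drift difference converges to ±v_{i0}. -/
theorem stmt_14 (n : ℕ) (b : OrthonormalBasis (Fin n) ℝ (EuclideanSpace ℝ (Fin n)))
    (i0 : Fin n) (f x₀ : EuclideanSpace ℝ (Fin n)) (h : ℝ) (hh : 0 < h)
    (hf : ⟪f, b i0⟫ ≠ 0) :
    (∀ (A : EuclideanSpace ℝ (Fin n) →ₗ[ℝ] EuclideanSpace ℝ (Fin n)) (lam : Fin n → ℝ),
      (∀ k, A (b k) = lam k • b k) →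
      let F := fun y : EuclideanSpace ℝ (Fin n) => f + A (y - x₀)
      let xE := x₀ - h • F x₀
      let xH := x₀ - (h / 2) • (F x₀ + F xE)
      F xH - F xE = A (xH - xE) ∧ A (xH - xE) = (h ^ 2 / 2) • A (A f)) ∧
    ∀ ε : ℝ, 0 < ε → ∃ G : ℝ,
      ∀ (A : EuclideanSpace ℝ (Fin n) →ₗ[ℝ] EuclideanSpace ℝ (Fin n)) (lam : Fin n → ℝ),
        (∀ k, A (b k) = lam k • b k) → lam i0 ≠ 0 →
        (∀ k, k ≠ i0 → G * |lam k| < |lam i0|) →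
        let d := (h ^ 2 / 2) • A (A f)
        d ≠ 0 ∧ (‖(‖d‖⁻¹ • d) - b i0‖ < ε ∨ ‖(‖d‖⁻¹ • d) + b i0‖ < ε) := by
  refine ⟨fun A _ _ => ⟨linearDrift_sub_linearDrift f A x₀ _ _, ?_⟩, fun ε hε => ?_⟩
  · exact (congrArg A (heunStep_sub_eulerStep_linearDrift f A x₀ h)).trans (map_smul _ _ _)
  obtain ⟨G, hG⟩ :=
    exists_gap_normalize_apply_near_basis (b := b) (real_inner_comm f (b i0) ▸ hf) hε
  refine ⟨max G 1, fun A lam hA hlam hgap => ?_⟩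
  set T : Module.End ℝ (EuclideanSpace ℝ (Fin n)) := (h ^ 2 / 2) • (A * A)
  have hT (k : Fin n) : T (b k) = (h ^ 2 / 2 * lam k ^ 2) • b k := by
    simp only [T, LinearMap.smul_apply, Module.End.mul_apply, hA, map_smul, smul_smul, sq]
  refine hG T _ hT (by positivity) fun k hk => ?_
  -- a gap `M ≥ max G 1` between the `λ`s gives the gap `M² ≥ G` between the `(h²/2) λ²`s
  set M := max G 1
  have hsq : M ^ 2 * lam k ^ 2 < lam i0 ^ 2 := by
    simpa [mul_pow, sq_abs] using pow_lt_pow_left₀ (hgap k hk) (by positivity) two_ne_zero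
  rw [abs_of_nonneg (by positivity), abs_of_nonneg (by positivity)]
  calc G * (h ^ 2 / 2 * lam k ^ 2) ≤ M ^ 2 * (h ^ 2 / 2 * lam k ^ 2) := by
        gcongr
        exact (le_max_left G 1).trans (le_self_pow₀ (le_max_right G 1) two_ne_zero)
    _ = h ^ 2 / 2 * (M ^ 2 * lam k ^ 2) := by ring
    _ < h ^ 2 / 2 * lam i0 ^ 2 := by gcongr
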